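/- arXiv:1204.2236 — 5 statements merged into one kernel-verified Lean document; each statement's English description precedes it below -/
import Mathlib

section
/- Let {B_i}_{i∈ℕ} be a sequence of balls in ℝ^n with M_n(B_i) → 0 as i → ∞, and let {U_i}_{i∈ℕ} be a sequence of Lebesgue measurable sets with U_i ⊆ B_i for all i ∈ ℕ. If there is a constant c > 0 such that M_n(U_i) ≥ c·M_n(B_i) for all i ∈ ℕ, then M_n(limsup_{i→∞} B_i) = M_n(limsup_{i→∞} U_i). -/
/-!
Fix `N` and let `W` be the set of points of `limsup Bᵢ` outside `⋃_{i ≥ N} Uᵢ`. If `W` had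
positive measure, Lebesgue's density theorem (for balls with moving centres) would give a point
`x ∈ W` at which `W` has density one along the balls `Bᵢ ∋ x`, whose radii tend to `0`. But for
`i ≥ N` the set `Uᵢ` fills a proportion at least `c` of `Bᵢ` and misses `W`, so the density of `W`
in `Bᵢ` is at most `1 - c`.
-/

open MeasureTheory Metric Filter Set Measure
open scoped ENNReal Topology

theorem measure_inter_le_one_sub_mul {α : Type*} [MeasurableSpace α] {μ : Measure α}
    {W U t : Set α} {κ : ℝ≥0∞} (hU : MeasurableSet U) (hUt : U ⊆ t) (hWU : Disjoint W U)
    (ht : μ t ≠ ∞) (hκ : κ * μ t ≤ μ U) :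
    μ (W ∩ t) ≤ (1 - κ) * μ t := by
  have hsum : μ (W ∩ t) + μ U ≤ μ t := by
    rw [← measure_union (hWU.mono_left inter_subset_left) hU]
    exact measure_mono (union_subset inter_subset_right hUt)
  calc μ (W ∩ t) ≤ μ t - μ U :=
        ENNReal.le_sub_of_add_le_right (measure_ne_top_of_subset hUt ht) hsum
    _ ≤ μ t - κ * μ t := tsub_le_tsub_left hκ _
    _ = (1 - κ) * μ t := by rw [ENNReal.sub_mul fun _ _ => ht, one_mul]

section AddHaar

variable {E : Type*} [NormedAddCommGroup E] [MeasurableSpace E] [BorelSpace E]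
  {μ : Measure E} [μ.IsAddHaarMeasure]

theorem tendsto_nhdsGT_of_tendsto_measure_ball {ι : Type*} {l : Filter ι} {c : ι → E}
    {r : ι → ℝ} {x : E} (h : Tendsto (fun i => μ (ball (c i) (r i))) l (𝓝 0))
    (hx : ∀ᶠ i in l, x ∈ ball (c i) (r i)) :
    Tendsto r l (𝓝[>] 0) := by
  have hpos : ∀ᶠ i in l, 0 < r i := hx.mono fun _ => pos_of_mem_ball
  refine tendsto_nhdsWithin_iff.2 ⟨Metric.tendsto_nhds.2 fun ε hε => ?_, hpos⟩
  filter_upwards [h.eventually_lt_const (measure_ball_pos μ (0 : E) hε), hpos] with i hi hri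
  rw [← addHaar_ball_center μ (c i)] at hi
  have hrε : r i < ε := by
    by_contra! hεr
    exact (measure_mono (ball_subset_ball hεr)).not_gt hi
  rwa [Real.dist_0_eq_abs, abs_of_pos hri]

variable [NormedSpace ℝ E] [FiniteDimensional ℝ E]
  {c : ℕ → E} {r : ℕ → ℝ} {U : ℕ → Set E} {κ : ℝ≥0∞}

theorem measure_limsup_ball_diff_iUnion_eq_zero
    (hB : Tendsto (fun i => μ (ball (c i) (r i))) atTop (𝓝 0))
    (hU : ∀ i, MeasurableSet (U i)) (hUB : ∀ i, U i ⊆ ball (c i) (r i)) (hκ : κ ≠ 0)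
    (hκU : ∀ i, κ * μ (ball (c i) (r i)) ≤ μ (U i)) (N : ℕ) :
    μ (limsup (fun i => ball (c i) (r i)) atTop \ ⋃ i ≥ N, U i) = 0 := by
  set W := limsup (fun i => ball (c i) (r i)) atTop \ ⋃ i ≥ N, U i
  by_contra hW
  obtain ⟨x, hxW, hx⟩ := Measure.exists_mem_of_measure_ne_zero_of_ae hW
    (IsUnifLocDoublingMeasure.ae_tendsto_measure_inter_div μ W 1)
  set l := atTop ⊓ 𝓟 {i | x ∈ ball (c i) (r i)}
  have hl : l.NeBot := frequently_iff_neBot.1 (mem_limsup_iff_frequently_mem.1 hxW.1)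
  have hxl : ∀ᶠ i in l, x ∈ ball (c i) (r i) := eventually_inf_principal.2 (.of_forall fun _ => id)
  have hdensity := hx c r (tendsto_nhdsGT_of_tendsto_measure_ball (hB.mono_left inf_le_left) hxl)
    (hxl.mono fun i hi => by rw [one_mul]; exact ball_subset_closedBall hi)
  have hsparse : ∀ᶠ i in l,
      μ (W ∩ closedBall (c i) (r i)) / μ (closedBall (c i) (r i)) ≤ 1 - κ := by
    filter_upwards [hxl, (eventually_ge_atTop N).filter_mono inf_le_left] with i hi hiN
    have hr := pos_of_mem_ball hi
    have hclosed : μ (closedBall (c i) (r i)) = μ (ball (c i) (r i)) := by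
      rw [addHaar_closedBall μ _ hr.le, addHaar_ball_of_pos μ _ hr]
    have hWU : Disjoint W (U i) :=
      disjoint_left.2 fun y hyW hyU => hyW.2 (mem_iUnion₂.2 ⟨i, hiN, hyU⟩)
    exact ENNReal.div_le_of_le_mul <| measure_inter_le_one_sub_mul (hU i)
      ((hUB i).trans ball_subset_closedBall) hWU measure_closedBall_lt_top.ne (hclosed ▸ hκU i)
  exact (ENNReal.sub_lt_self ENNReal.one_ne_top one_ne_zero hκ).not_ge
    (le_of_tendsto hdensity hsparse)

theorem limsup_ae_eq_limsup_ball
    (hB : Tendsto (fun i => μ (ball (c i) (r i))) atTop (𝓝 0))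
    (hU : ∀ i, MeasurableSet (U i)) (hUB : ∀ i, U i ⊆ ball (c i) (r i)) (hκ : κ ≠ 0)
    (hκU : ∀ i, κ * μ (ball (c i) (r i)) ≤ μ (U i)) :
    (limsup U atTop : Set E) =ᵐ[μ] (limsup (fun i => ball (c i) (r i)) atTop : Set E) := by
  refine (limsup_le_limsup (.of_forall hUB)).eventuallyLE.antisymm ?_
  rw [ae_le_set, limsup_eq_iInf_iSup_of_nat (u := U), iInf_eq_iInter, sdiff_iInter,
    measure_iUnion_null_iff]
  intro N
  simpa only [iSup_eq_iUnion] using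
    measure_limsup_ball_diff_iUnion_eq_zero hB hU hUB hκ hκU N

end AddHaar

theorem limsup_balls_same_measure (n : ℕ)
    (c : ℕ → EuclideanSpace ℝ (Fin n)) (r : ℕ → ℝ)
    (B : ℕ → Set (EuclideanSpace ℝ (Fin n))) (hB : ∀ i, B i = Metric.ball (c i) (r i))
    (hB0 : Filter.Tendsto (fun i => volume (B i)) Filter.atTop (nhds 0))
    (U : ℕ → Set (EuclideanSpace ℝ (Fin n)))
    (hUmeas : ∀ i, MeasurableSet (U i)) (hUB : ∀ i, U i ⊆ B i)
    (cst : ℝ) (hcst : 0 < cst)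
    (hlow : ∀ i, ENNReal.ofReal cst * volume (B i) ≤ volume (U i)) :
    volume (⋂ N : ℕ, ⋃ i : ℕ, ⋃ (_ : N ≤ i), B i) =
      volume (⋂ N : ℕ, ⋃ i : ℕ, ⋃ (_ : N ≤ i), U i) := by
  obtain rfl : B = fun i => ball (c i) (r i) := funext hB
  have hae := limsup_ae_eq_limsup_ball hB0 hUmeas hUB (ENNReal.ofReal_pos.2 hcst).ne' hlow
  simpa only [limsup_eq_iInf_iSup_of_nat, iInf_eq_iInter, iSup_eq_iUnion, ge_iff_le] using
    (measure_congr hae).symm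
end

section
/- Let n ≥ 1, let s ≥ 2 be an integer, and let e ∈ ℤ^n. Consider the transformation T of 𝕀^n into itself given by T(X) = sX + e/s (mod 1), taken coordinatewise. If A ⊆ 𝕀^n is a Lebesgue measurable set with T(A) ⊆ A, then M_n(A) = 0 or M_n(A) = 1. -/
/-!
Discarding a null set, `A ⊆ [0,1)ⁿ`. Composites of maps `X ↦ m X + c (mod 1)` are again of
this form, so `A` is invariant under `G X = s^k X + c (mod 1)` for every `k` and a suitable `c`.
On an `s`-adic box `B` of side lengths at least `s^{-k}`, `G` pushes Lebesgue measure forward to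
`vol B` times Lebesgue measure on the cube `[0,1)ⁿ`. As `A ⊆ G⁻¹ A ∩ [0,1)ⁿ` and both sets have
measure `vol A`, they agree up to a null set, hence `vol (A ∩ B) = vol (G⁻¹ A ∩ B) = vol B * vol A`.
The `s`-adic boxes form a π-system generating the Borel sets, so `vol (A ∩ E) = vol E * vol A`
for every Borel `E ⊆ [0,1)ⁿ`; taking `E = A` gives `vol A = (vol A)^2`.
-/

open MeasureTheory Set
open scoped ENNReal

lemma volume_fract_preimage_inter_Ico {S : Set ℝ} (hS : MeasurableSet S) (a : ℝ) :
    volume (Int.fract ⁻¹' S ∩ Ico a (a + 1)) = volume (S ∩ Ico 0 1) := by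
  have hinv : ∀ g : AddSubgroup.zmultiples (1 : ℝ),
      (g +ᵥ ·) ⁻¹' (Int.fract ⁻¹' S) = Int.fract ⁻¹' S := by
    rintro ⟨_, m, rfl⟩
    ext x
    simp [AddSubgroup.vadd_def]
  calc volume (Int.fract ⁻¹' S ∩ Ico a (a + 1))
      = volume (Int.fract ⁻¹' S ∩ Ioc a (a + 1)) :=
        measure_congr ((ae_eq_refl _).inter Ico_ae_eq_Ioc)
    _ = volume (Int.fract ⁻¹' S ∩ Ioc 0 (0 + 1)) :=
        (isAddFundamentalDomain_Ioc one_pos a).measure_set_eq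
          (isAddFundamentalDomain_Ioc one_pos 0) (measurable_fract hS) hinv
    _ = volume (Int.fract ⁻¹' S ∩ Ico 0 1) := by
        rw [zero_add]
        exact measure_congr ((ae_eq_refl _).inter Ico_ae_eq_Ioc.symm)
    _ = volume (S ∩ Ico 0 1) := by
        congr 1
        ext x
        simp only [mem_inter_iff, mem_preimage, and_congr_left_iff]
        intro hx
        rw [Int.fract_eq_self.2 hx]

lemma volume_fract_preimage_inter_Ico_add_natCast {S : Set ℝ} (hS : MeasurableSet S) (a : ℝ)
    (N : ℕ) : volume (Int.fract ⁻¹' S ∩ Ico a (a + N)) = N * volume (S ∩ Ico 0 1) := by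
  induction N with
  | zero => simp
  | succ N ih =>
    rw [Nat.cast_succ, ← add_assoc, ← Ico_union_Ico_eq_Ico (b := a + N) (by simp) (by simp),
      inter_union_distrib_left, measure_union ?_ ((measurable_fract hS).inter measurableSet_Ico),
      ih, volume_fract_preimage_inter_Ico hS, Nat.cast_succ, add_one_mul]
    exact Ico_disjoint_Ico_same.mono inter_subset_right inter_subset_right

lemma volume_fract_mul_add_preimage_inter_Ico {S : Set ℝ} (hS : MeasurableSet S) {m : ℝ}
    (hm : 0 < m) (c : ℝ) {u v : ℝ} {N : ℕ} (huv : m * (v - u) = N) :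
    volume ((fun x ↦ Int.fract (m * x + c)) ⁻¹' S ∩ Ico u v) =
      volume (Ico u v) * volume (S ∩ Ico 0 1) := by
  have hpre : (fun x ↦ Int.fract (m * x + c)) ⁻¹' S ∩ Ico u v =
      (m * ·) ⁻¹' ((· + c) ⁻¹' (Int.fract ⁻¹' S ∩ Ico (m * u + c) (m * u + c + N))) := by
    ext x
    simp only [mem_inter_iff, mem_preimage, mem_Ico, ← huv, add_le_add_iff_right,
      mul_le_mul_iff_of_pos_left hm]
    constructor <;> rintro ⟨h1, h2, h3⟩ <;> refine ⟨h1, h2, ?_⟩ <;> nlinarith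
  rw [hpre, Real.volume_preimage_mul_left hm.ne', measure_preimage_add_right,
    volume_fract_preimage_inter_Ico_add_natCast hS, ← mul_assoc, Real.volume_Ico,
    ← ENNReal.ofReal_natCast, ← ENNReal.ofReal_mul (by positivity), ← huv,
    abs_of_pos (inv_pos.2 hm), inv_mul_cancel_left₀ hm.ne']

def adicInterval (s k : ℕ) (a : ℤ) : Set ℝ := Ico (a / s ^ k) ((a + 1) / s ^ k)

def adicIntervals (s : ℕ) : Set (Set ℝ) := range fun p : ℕ × ℤ ↦ adicInterval s p.1 p.2

section AdicIntervals

variable {s : ℕ}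

lemma mem_adicInterval_iff (hs : 0 < s) {k : ℕ} {a : ℤ} {x : ℝ} :
    x ∈ adicInterval s k a ↔ ⌊x * s ^ k⌋ = a := by
  have : (0 : ℝ) < s ^ k := by positivity
  rw [adicInterval, mem_Ico, div_le_iff₀ this, lt_div_iff₀ this, Int.floor_eq_iff]

-- `b / s ^ (k - j)` is floor division on `ℤ`: the index of the level-`j` parent interval.
lemma adicInterval_subset_adicInterval_div (hs : 0 < s) {j k : ℕ} (hjk : j ≤ k) (b : ℤ) :
    adicInterval s k b ⊆ adicInterval s j (b / (s ^ (k - j) : ℕ)) := by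
  intro x hx
  rw [mem_adicInterval_iff hs] at hx ⊢
  have hpow : (s : ℝ) ^ k / (s : ℝ) ^ (k - j) = s ^ j := by
    rw [div_eq_iff (by positivity), ← pow_add, Nat.add_sub_cancel' hjk]
  rw [← hx, ← Int.floor_div_natCast, Nat.cast_pow, mul_div_assoc, hpow]

lemma adicInterval_subset_of_le (hs : 0 < s) {j k : ℕ} (hjk : j ≤ k) {a b : ℤ}
    (h : (adicInterval s j a ∩ adicInterval s k b).Nonempty) :
    adicInterval s k b ⊆ adicInterval s j a := by
  obtain ⟨x, hxa, hxb⟩ := h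
  have hparent := adicInterval_subset_adicInterval_div hs hjk b
  rw [mem_adicInterval_iff hs] at hxa
  rwa [← (mem_adicInterval_iff hs).1 (hparent hxb), hxa] at hparent

lemma isPiSystem_adicIntervals (hs : 0 < s) : IsPiSystem (adicIntervals s) := by
  rintro _ ⟨⟨j, a⟩, rfl⟩ _ ⟨⟨k, b⟩, rfl⟩ h
  rcases le_total j k with hjk | hkj
  · rw [inter_eq_right.2 (adicInterval_subset_of_le hs hjk h)]
    exact ⟨(k, b), rfl⟩
  · rw [inter_eq_left.2 (adicInterval_subset_of_le hs hkj (inter_comm _ _ ▸ h))]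
    exact ⟨(j, a), rfl⟩

lemma isCountablySpanning_adicIntervals (hs : 0 < s) : IsCountablySpanning (adicIntervals s) := by
  refine ⟨fun n ↦ adicInterval s 0 (Denumerable.ofNat ℤ n), fun n ↦ ⟨(0, _), rfl⟩, ?_⟩
  refine eq_univ_of_forall fun x ↦ mem_iUnion.2 ⟨Encodable.encode ⌊x⌋, ?_⟩
  rw [Denumerable.ofNat_encode, mem_adicInterval_iff hs, pow_zero, mul_one]

lemma dist_lt_of_mem_adicInterval (hs : 0 < s) {k : ℕ} {a : ℤ} {x y : ℝ}
    (hx : x ∈ adicInterval s k a) (hy : y ∈ adicInterval s k a) : dist y x < (s ^ k : ℝ)⁻¹ := by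
  have : (0 : ℝ) < s ^ k := by positivity
  rw [adicInterval, mem_Ico] at hx hy
  rw [Real.dist_eq, abs_sub_lt_iff]
  have hlen : ((a : ℝ) + 1) / s ^ k - a / s ^ k = (s ^ k : ℝ)⁻¹ := by field_simp; ring
  constructor <;> linarith

lemma measurableSet_generateFrom_adicIntervals_of_isOpen (hs : 2 ≤ s) {U : Set ℝ}
    (hU : IsOpen U) : MeasurableSet[MeasurableSpace.generateFrom (adicIntervals s)] U := by
  have hs0 : 0 < s := by omega
  have hcover : U = ⋃₀ {J ∈ adicIntervals s | J ⊆ U} := by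
    refine (sUnion_subset fun J hJ ↦ hJ.2).antisymm' fun x hx ↦ ?_
    obtain ⟨ε, hε, hball⟩ := Metric.isOpen_iff.1 hU x hx
    obtain ⟨k, hk⟩ := exists_pow_lt_of_lt_one hε (inv_lt_one_of_one_lt₀ (by exact_mod_cast hs :
      (1 : ℝ) < s))
    have hx : x ∈ adicInterval s k ⌊x * s ^ k⌋ := (mem_adicInterval_iff hs0).2 rfl
    refine ⟨adicInterval s k ⌊x * s ^ k⌋, ⟨⟨(k, _), rfl⟩, fun y hy ↦ hball ?_⟩, hx⟩
    exact (dist_lt_of_mem_adicInterval hs0 hx hy).trans (by rwa [inv_pow] at hk)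
  rw [hcover]
  exact .sUnion ((countable_range _).mono fun _ h ↦ h.1) fun J hJ ↦ .basic J hJ.1

lemma generateFrom_adicIntervals (hs : 2 ≤ s) :
    MeasurableSpace.generateFrom (adicIntervals s) = borel ℝ := by
  refine le_antisymm (MeasurableSpace.generateFrom_le ?_)
    (MeasurableSpace.generateFrom_le fun U hU ↦
      measurableSet_generateFrom_adicIntervals_of_isOpen hs hU)
  rintro _ ⟨⟨k, a⟩, rfl⟩
  exact measurableSet_Ico

end AdicIntervals

instance isFiniteMeasure_restrict_adicInterval (s k : ℕ) (a : ℤ) :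
    IsFiniteMeasure (volume.restrict (adicInterval s k a)) := by
  rw [adicInterval]
  infer_instance

lemma map_fract_pow_mul_add_restrict_adicInterval {s : ℕ} (hs : 0 < s) {j k : ℕ} (hjk : j ≤ k)
    (c : ℝ) (a : ℤ) :
    (volume.restrict (adicInterval s j a)).map (fun x ↦ Int.fract ((s ^ k : ℕ) * x + c)) =
      volume (adicInterval s j a) • volume.restrict (Ico 0 1) := by
  have hmeas : Measurable fun x : ℝ ↦ Int.fract (((s ^ k : ℕ) : ℝ) * x + c) := by fun_prop
  have hlen : ((s ^ k : ℕ) : ℝ) * ((a + 1) / s ^ j - a / s ^ j) = (s ^ (k - j) : ℕ) := by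
    rw [Nat.cast_pow, Nat.cast_pow, ← Nat.add_sub_cancel' hjk, pow_add, Nat.add_sub_cancel_left]
    field_simp
    ring
  ext S hS
  rw [Measure.map_apply hmeas hS, Measure.restrict_apply (hmeas hS), Measure.smul_apply,
    smul_eq_mul, Measure.restrict_apply hS]
  exact volume_fract_mul_add_preimage_inter_Ico hS (by positivity) c hlen

lemma Int.fract_natCast_mul_fract_add (m : ℕ) (z w : ℝ) :
    Int.fract (m * Int.fract z + w) = Int.fract (m * z + w) := by
  rw [← Int.self_sub_floor z, mul_sub, sub_add_eq_add_sub, ← Int.cast_natCast, ← Int.cast_mul,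
    Int.fract_sub_intCast]

noncomputable def fractAffine {ι : Type*} (m : ℕ) (c : ι → ℝ) : (ι → ℝ) → ι → ℝ :=
  fun X i ↦ Int.fract (m * X i + c i)

def unitCube (ι : Type*) : Set (ι → ℝ) := univ.pi fun _ ↦ Ico 0 1

section FractAffine

variable {ι : Type*}

lemma fractAffine_comp (m m' : ℕ) (c c' : ι → ℝ) :
    fractAffine m' c' ∘ fractAffine m c = fractAffine (m' * m) (fun i ↦ m' * c i + c' i) := by
  ext X i
  simp only [Function.comp_apply, fractAffine, Int.fract_natCast_mul_fract_add]
  push_cast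
  ring_nf

lemma exists_mapsTo_fractAffine_pow {m : ℕ} {c : ι → ℝ} {A : Set (ι → ℝ)}
    (hT : MapsTo (fractAffine m c) A A) (k : ℕ) :
    ∃ c' : ι → ℝ, MapsTo (fractAffine (m ^ (k + 1)) c') A A := by
  induction k with
  | zero => exact ⟨c, by rwa [zero_add, pow_one]⟩
  | succ k ih =>
    obtain ⟨c', hc'⟩ := ih
    exact ⟨_, pow_succ' m (k + 1) ▸ fractAffine_comp _ _ c' c ▸ hT.comp hc'⟩

lemma fractAffine_mem_unitCube (m : ℕ) (c X : ι → ℝ) : fractAffine m c X ∈ unitCube ι :=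
  fun _ _ ↦ ⟨Int.fract_nonneg _, Int.fract_lt_one _⟩

lemma measurableSet_unitCube [Countable ι] : MeasurableSet (unitCube ι) :=
  .univ_pi fun _ ↦ measurableSet_Ico

lemma volume_unitCube [Fintype ι] : volume (unitCube ι) = 1 := by
  simp [unitCube, volume_pi, Measure.pi_pi]

lemma volume_ne_top_of_subset_unitCube [Fintype ι] {A : Set (ι → ℝ)} (hA : A ⊆ unitCube ι) :
    volume A ≠ ∞ :=
  ((measure_mono hA).trans_lt (volume_unitCube.trans_lt ENNReal.one_lt_top)).ne

end FractAffine

def adicBox {ι : Type*} (s : ℕ) (κ : ι → ℕ) (a : ι → ℤ) : Set (ι → ℝ) :=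
  univ.pi fun i ↦ adicInterval s (κ i) (a i)

def adicBoxes (s : ℕ) (ι : Type*) : Set (Set (ι → ℝ)) :=
  univ.pi '' univ.pi fun _ ↦ adicIntervals s

section AdicBoxes

variable {ι : Type*} {s : ℕ}

lemma mem_adicBoxes {B : Set (ι → ℝ)} : B ∈ adicBoxes s ι ↔ ∃ κ a, adicBox s κ a = B := by
  constructor
  · rintro ⟨J, hJ, rfl⟩
    choose p hp using fun i ↦ hJ i (mem_univ i)
    exact ⟨fun i ↦ (p i).1, fun i ↦ (p i).2, by simp only [adicBox, hp]⟩
  · rintro ⟨κ, a, rfl⟩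
    exact ⟨_, fun i _ ↦ ⟨(κ i, a i), rfl⟩, rfl⟩

lemma adicBox_zero : adicBox s 0 0 = unitCube ι := by
  simp [adicBox, adicInterval, unitCube]

lemma isPiSystem_adicBoxes (hs : 0 < s) : IsPiSystem (adicBoxes s ι) :=
  .pi fun _ ↦ isPiSystem_adicIntervals hs

lemma generateFrom_adicBoxes [Finite ι] (hs : 2 ≤ s) :
    MeasurableSpace.generateFrom (adicBoxes s ι) = MeasurableSpace.pi :=
  generateFrom_eq_pi (fun _ ↦ generateFrom_adicIntervals hs)
    fun _ ↦ isCountablySpanning_adicIntervals (by omega)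

variable [Fintype ι]

lemma map_fractAffine_restrict_adicBox (hs : 0 < s) {κ : ι → ℕ} {k : ℕ} (hκ : ∀ i, κ i ≤ k)
    (c : ι → ℝ) (a : ι → ℤ) :
    (volume.restrict (adicBox s κ a)).map (fractAffine (s ^ k) c) =
      volume (adicBox s κ a) • volume.restrict (unitCube ι) := by
  rw [adicBox, volume_pi, Measure.restrict_pi_pi]
  unfold fractAffine
  rw [Measure.pi_map_pi (f := fun i x ↦ Int.fract (((s ^ k : ℕ) : ℝ) * x + c i))
    fun _ ↦ by fun_prop]
  refine Measure.pi_eq fun t ht ↦ ?_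
  simp_rw [map_fract_pow_mul_add_restrict_adicInterval hs (hκ _)]
  rw [Measure.smul_apply, smul_eq_mul, unitCube, Measure.restrict_apply (.univ_pi ht),
    ← pi_inter_distrib, Measure.pi_pi, Measure.pi_pi, ← Finset.prod_mul_distrib]
  simp [Measure.restrict_apply (ht _)]

lemma volume_fractAffine_preimage_inter_adicBox (hs : 0 < s) {κ : ι → ℕ} {k : ℕ}
    (hκ : ∀ i, κ i ≤ k) (c : ι → ℝ) (a : ι → ℤ) {S : Set (ι → ℝ)} (hS : MeasurableSet S) :
    volume (fractAffine (s ^ k) c ⁻¹' S ∩ adicBox s κ a) =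
      volume (adicBox s κ a) * volume (S ∩ unitCube ι) := by
  have hmeas : Measurable (fractAffine (ι := ι) (s ^ k) c) := by
    unfold fractAffine
    fun_prop
  rw [← Measure.restrict_apply (hmeas hS), ← Measure.map_apply hmeas hS,
    map_fractAffine_restrict_adicBox hs hκ, Measure.smul_apply, smul_eq_mul,
    Measure.restrict_apply hS]

end AdicBoxes

section Invariant

variable {ι : Type*} [Fintype ι] {s : ℕ} {A : Set (ι → ℝ)}

lemma volume_inter_adicBox_of_mapsTo (hs : 0 < s) (hA : MeasurableSet A) (hAC : A ⊆ unitCube ι)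
    {k : ℕ} {c : ι → ℝ} (hT : MapsTo (fractAffine (s ^ k) c) A A) {κ : ι → ℕ}
    (hκ : ∀ i, κ i ≤ k) (a : ι → ℤ) (hB : adicBox s κ a ⊆ unitCube ι) :
    volume (A ∩ adicBox s κ a) = volume (adicBox s κ a) * volume A := by
  set G := fractAffine (s ^ k) c
  have hcube : volume (G ⁻¹' A ∩ unitCube ι) = volume A := by
    simpa [adicBox_zero, volume_unitCube, inter_eq_left.2 hAC] using
      volume_fractAffine_preimage_inter_adicBox hs (κ := 0) (fun _ ↦ Nat.zero_le k) c 0 hA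
  have hae : A =ᵐ[volume] (G ⁻¹' A ∩ unitCube ι : Set (ι → ℝ)) :=
    ae_eq_of_subset_of_measure_ge (fun X hX ↦ ⟨hT hX, hAC hX⟩) hcube.le hA.nullMeasurableSet
      (hcube ▸ volume_ne_top_of_subset_unitCube hAC)
  calc volume (A ∩ adicBox s κ a)
      = volume (G ⁻¹' A ∩ unitCube ι ∩ adicBox s κ a) :=
        measure_congr (hae.inter (ae_eq_refl _))
    _ = volume (G ⁻¹' A ∩ adicBox s κ a) := by rw [inter_assoc, inter_eq_right.2 hB]
    _ = volume (adicBox s κ a) * volume A := by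
        rw [volume_fractAffine_preimage_inter_adicBox hs hκ c a hA, inter_eq_left.2 hAC]

lemma volume_restrict_eq_smul_of_mapsTo (hs : 2 ≤ s) (hA : MeasurableSet A)
    (hAC : A ⊆ unitCube ι) {c : ι → ℝ} (hT : MapsTo (fractAffine s c) A A) :
    volume.restrict A = volume A • volume.restrict (unitCube ι) := by
  have hs0 : 0 < s := by omega
  have : IsFiniteMeasure (volume.restrict A) :=
    ⟨by simpa using (volume_ne_top_of_subset_unitCube hAC).lt_top⟩
  refine ext_of_generate_finite _ (generateFrom_adicBoxes hs).symm (isPiSystem_adicBoxes hs0)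
    (fun B hB ↦ ?_) (by simp [volume_unitCube])
  have hBm : MeasurableSet B := by
    obtain ⟨κ, a, rfl⟩ := mem_adicBoxes.1 hB
    exact .univ_pi fun _ ↦ measurableSet_Ico
  have hBA : B ∩ A = A ∩ (B ∩ unitCube ι) := by rw [inter_left_comm, inter_eq_left.2 hAC]
  rw [Measure.restrict_apply hBm, Measure.smul_apply, smul_eq_mul, Measure.restrict_apply hBm, hBA]
  rcases (B ∩ unitCube ι).eq_empty_or_nonempty with hempty | hne
  · rw [hempty, inter_empty, measure_empty, mul_zero]
  obtain ⟨κ, a, hκa⟩ := mem_adicBoxes.1 <| isPiSystem_adicBoxes hs0 B hB _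
    (mem_adicBoxes.2 ⟨0, 0, adicBox_zero⟩) hne
  obtain ⟨c', hc'⟩ := exists_mapsTo_fractAffine_pow hT (Finset.univ.sup κ)
  rw [← hκa, mul_comm, volume_inter_adicBox_of_mapsTo hs0 hA hAC hc'
    (fun i ↦ (Finset.le_sup (Finset.mem_univ i)).trans (Nat.le_succ _)) a
    (hκa ▸ inter_subset_right)]

lemma volume_eq_zero_or_one_of_mapsTo (hs : 2 ≤ s) (hA : MeasurableSet A)
    (hAC : A ⊆ unitCube ι) {c : ι → ℝ} (hT : MapsTo (fractAffine s c) A A) :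
    volume A = 0 ∨ volume A = 1 := by
  have hself : volume A = volume A * volume A := by
    simpa [Measure.restrict_apply hA, inter_eq_left.2 hAC] using
      congrArg (· A) (volume_restrict_eq_smul_of_mapsTo hs hA hAC hT)
  refine or_iff_not_imp_left.2 fun h ↦ ?_
  exact (ENNReal.mul_right_inj h (volume_ne_top_of_subset_unitCube hAC)).1
    (by rw [mul_one, ← hself])

end Invariant

theorem invariant_set_zero_one_general (n : ℕ) (s : ℕ) (hs : 2 ≤ s)
    (e : Fin n → ℤ) (A : Set (Fin n → ℝ))
    (hAsub : A ⊆ {X | ∀ i, X i ∈ Set.Icc (0 : ℝ) 1})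
    (hAmeas : MeasurableSet A)
    (hTA : ∀ X ∈ A, (fun i => Int.fract ((s : ℝ) * X i + (e i : ℝ) / (s : ℝ))) ∈ A) :
    volume A = 0 ∨ volume A = 1 := by
  have hT : MapsTo (fractAffine s fun i ↦ (e i : ℝ) / s) A A := hTA
  have hA_Icc : A ∩ Icc 0 1 = A :=
    inter_eq_left.2 fun X hX ↦ ⟨fun i ↦ (hAsub hX i).1, fun i ↦ (hAsub hX i).2⟩
  have hae : (A ∩ unitCube (Fin n) : Set (Fin n → ℝ)) =ᵐ[volume] A := by
    conv_rhs => rw [← hA_Icc]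
    exact (ae_eq_refl A).inter (Measure.univ_pi_Ico_ae_eq_Icc (μ := fun _ ↦ volume))
  rw [← measure_congr hae]
  exact volume_eq_zero_or_one_of_mapsTo hs (hAmeas.inter measurableSet_unitCube)
    inter_subset_right
    ((hT.mono_left inter_subset_left).inter fun X _ ↦ fractAffine_mem_unitCube _ _ X)

theorem invariant_set_zero_one (n : ℕ) (hn : 1 ≤ n) (s : ℕ) (hs : 2 ≤ s)
    (e : Fin n → ℤ) (A : Set (Fin n → ℝ))
    (hAsub : A ⊆ {X | ∀ i, X i ∈ Set.Icc (0 : ℝ) 1})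
    (hAmeas : MeasurableSet A)
    (hTA : ∀ X ∈ A, (fun i => Int.fract ((s : ℝ) * X i + (e i : ℝ) / (s : ℝ))) ∈ A) :
    volume A = 0 ∨ volume A = 1 :=
  invariant_set_zero_one_general n s hs e A hAsub hAmeas hTA
end

section
/- Let n ≥ 1 and let A ⊆ 𝕀^n be a Lebesgue measurable set such that for every line L parallel to one of the n coordinate axes (i.e., for every index i ∈ {1,…,n} and every choice of fixed values in 𝕀 for the coordinates other than i), the one-dimensional Lebesgue measure of the section A ∩ L equals 0 or 1. Then M_n(A) = 0 or M_n(A) = 1. -/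
/-!
Induction on the dimension. Splitting off the first coordinate, `A` is a.e. the cylinder over the
set `B` of points above which the line of `A` in direction `0` is full, so `A` and `B` have the same
measure. Every line of `B` is again null or full: a line of `B` in direction `j` is the set of full
vertical lines of a planar section `S` of `A` whose vertical and horizontal lines are lines of `A`.
Such an `S` is a.e. both a vertical cylinder `T ×ˢ univ` and a horizontal one `univ ×ˢ U`, so the
rectangle `T ×ˢ Uᶜ` is null, which for `m = μ T = ν U` reads `m * (1 - m) = 0`.
-/

open MeasureTheory Set Function

section Slices

variable {α β : Type*} [MeasurableSpace α] [MeasurableSpace β]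

lemma ae_mem_iff_measure_eq_one {μ : Measure α} [IsProbabilityMeasure μ] {s : Set α}
    (hs : MeasurableSet s) (h : μ s = 0 ∨ μ s = 1) : ∀ᵐ x ∂μ, x ∈ s ↔ μ s = 1 := by
  rcases h with h | h
  · simpa [h] using measure_eq_zero_iff_ae_notMem.1 h
  · simpa [h] using (mem_ae_iff_prob_eq_one hs).2 h

variable {μ : Measure α} {ν : Measure β} {S : Set (α × β)}

lemma ae_eq_prod_univ_of_measure_slice_eq_zero_or_one [SFinite μ] [IsProbabilityMeasure ν]
    (hS : MeasurableSet S) (h : ∀ x, ν (Prod.mk x ⁻¹' S) = 0 ∨ ν (Prod.mk x ⁻¹' S) = 1) :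
    S =ᵐ[μ.prod ν] {x | ν (Prod.mk x ⁻¹' S) = 1} ×ˢ univ := by
  have hT : MeasurableSet {x | ν (Prod.mk x ⁻¹' S) = 1} :=
    measurable_measure_prodMk_left hS (measurableSet_singleton 1)
  refine Filter.eventuallyEq_set.2 <| (Measure.ae_prod_iff_ae_ae (hS.iff (hT.prod .univ))).2 ?_
  filter_upwards with x
  filter_upwards [ae_mem_iff_measure_eq_one (measurable_prodMk_left hS) (h x)] with y hy
  exact hy.trans (by simp : _ ↔ (x, y) ∈ _ ×ˢ univ)

lemma ae_eq_univ_prod_of_measure_slice_eq_zero_or_one [IsProbabilityMeasure μ] [SFinite ν]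
    (hS : MeasurableSet S)
    (h : ∀ y, μ ((·, y) ⁻¹' S) = 0 ∨ μ ((·, y) ⁻¹' S) = 1) :
    S =ᵐ[μ.prod ν] univ ×ˢ {y | μ ((·, y) ⁻¹' S) = 1} := by
  have hU : MeasurableSet {y | μ ((·, y) ⁻¹' S) = 1} :=
    measurable_measure_prodMk_right hS (measurableSet_singleton 1)
  have hSU := hS.iff (MeasurableSet.univ.prod hU)
  refine Filter.eventuallyEq_set.2 <| (Measure.ae_prod_iff_ae_ae hSU).2 ?_
  refine (Measure.ae_ae_comm hSU).2 ?_
  filter_upwards with y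
  filter_upwards [ae_mem_iff_measure_eq_one (measurable_prodMk_right hS) (h y)] with x hx
  exact hx.trans (by simp : _ ↔ (x, y) ∈ univ ×ˢ _)

lemma measure_prod_eq_of_measure_slice_eq_zero_or_one [IsProbabilityMeasure μ] [SFinite ν]
    (hS : MeasurableSet S)
    (h : ∀ y, μ ((·, y) ⁻¹' S) = 0 ∨ μ ((·, y) ⁻¹' S) = 1) :
    μ.prod ν S = ν {y | μ ((·, y) ⁻¹' S) = 1} := by
  rw [measure_congr (ae_eq_univ_prod_of_measure_slice_eq_zero_or_one hS h), Measure.prod_prod,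
    measure_univ, one_mul]

lemma measure_prod_eq_zero_or_one_of_measure_slice [IsProbabilityMeasure μ]
    [IsProbabilityMeasure ν] (hS : MeasurableSet S)
    (hleft : ∀ x, ν (Prod.mk x ⁻¹' S) = 0 ∨ ν (Prod.mk x ⁻¹' S) = 1)
    (hright : ∀ y, μ ((·, y) ⁻¹' S) = 0 ∨ μ ((·, y) ⁻¹' S) = 1) :
    μ.prod ν S = 0 ∨ μ.prod ν S = 1 := by
  set T := {x | ν (Prod.mk x ⁻¹' S) = 1}
  set U := {y | μ ((·, y) ⁻¹' S) = 1}
  have hU : MeasurableSet U := measurable_measure_prodMk_right hS (measurableSet_singleton 1)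
  have hST := ae_eq_prod_univ_of_measure_slice_eq_zero_or_one (μ := μ) hS hleft
  have hSU := ae_eq_univ_prod_of_measure_slice_eq_zero_or_one (ν := ν) hS hright
  have hμT : μ T = μ.prod ν S := by
    rw [measure_congr hST, Measure.prod_prod, measure_univ, mul_one]
  have hνU : ν U = μ.prod ν S := by
    rw [measure_congr hSU, Measure.prod_prod, measure_univ, one_mul]
  have hrect : μ.prod ν (T ×ˢ Uᶜ) = 0 := by
    have : T ×ˢ Uᶜ = T ×ˢ univ \ univ ×ˢ U := by ext; simp
    rw [this]
    exact (ae_eq_set.1 (hST.symm.trans hSU)).1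
  rw [Measure.prod_prod, prob_compl_eq_one_sub hU, hμT, hνU, mul_eq_zero,
    tsub_eq_zero_iff_le] at hrect
  exact hrect.imp_right (le_antisymm prob_le_one)

end Slices

def HasZeroOneLines {ι : Type*} [DecidableEq ι] {α : ι → Type*} [∀ i, MeasurableSpace (α i)]
    (μ : ∀ i, Measure (α i)) (A : Set (∀ i, α i)) : Prop :=
  ∀ i (y : ∀ j, α j), μ i {t | update y i t ∈ A} = 0 ∨ μ i {t | update y i t ∈ A} = 1

section Lines

variable {n : ℕ} {α : Fin (n + 1) → Type*} [∀ i, MeasurableSpace (α i)]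

lemma measurable_insertNth_zero :
    Measurable fun p : α 0 × (∀ j, α (Fin.succAbove 0 j)) => Fin.insertNth 0 p.1 p.2 :=
  (MeasurableEquiv.piFinSuccAbove α 0).symm.measurable

lemma measure_pi_eq_measure_prod_preimage_insertNth (μ : ∀ i, Measure (α i))
    [∀ i, SigmaFinite (μ i)] {A : Set (∀ i, α i)} (hA : MeasurableSet A) :
    Measure.pi μ A = ((μ 0).prod (Measure.pi fun j => μ (Fin.succAbove 0 j)))
      ((fun p => Fin.insertNth 0 p.1 p.2) ⁻¹' A) :=
  ((measurePreserving_piFinSuccAbove μ 0).symm.measure_preimage hA.nullMeasurableSet).symm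

variable (μ : ∀ i, Measure (α i)) (A : Set (∀ i, α i))

def fullLines : Set (∀ j, α (Fin.succAbove 0 j)) :=
  {y | μ 0 {t | Fin.insertNth 0 t y ∈ A} = 1}

variable {μ A} [∀ i, IsProbabilityMeasure (μ i)]

lemma HasZeroOneLines.measure_insertNth_zero (h : HasZeroOneLines μ A)
    (y : ∀ j, α (Fin.succAbove 0 j)) :
    μ 0 {t | Fin.insertNth 0 t y ∈ A} = 0 ∨ μ 0 {t | Fin.insertNth 0 t y ∈ A} = 1 := by
  obtain ⟨t₀⟩ := nonempty_of_isProbabilityMeasure (μ 0)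
  simpa using h 0 (Fin.insertNth 0 t₀ y)

lemma measurableSet_fullLines (hA : MeasurableSet A) : MeasurableSet (fullLines μ A) :=
  measurable_measure_prodMk_right (measurable_insertNth_zero hA) (measurableSet_singleton 1)

lemma measure_pi_eq_measure_pi_fullLines (hA : MeasurableSet A) (h : HasZeroOneLines μ A) :
    Measure.pi μ A = Measure.pi (fun j => μ (Fin.succAbove 0 j)) (fullLines μ A) := by
  rw [measure_pi_eq_measure_prod_preimage_insertNth μ hA]
  exact measure_prod_eq_of_measure_slice_eq_zero_or_one (measurable_insertNth_zero hA)
    h.measure_insertNth_zero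

lemma HasZeroOneLines.fullLines (hA : MeasurableSet A) (h : HasZeroOneLines μ A) :
    HasZeroOneLines (fun j => μ (Fin.succAbove 0 j)) (fullLines μ A) := by
  intro j z
  set S : Set (α 0 × α (Fin.succAbove 0 j)) :=
    (fun p => Fin.insertNth 0 p.1 (update z j p.2)) ⁻¹' A
  have hS : MeasurableSet S := measurable_insertNth_zero.comp
    (measurable_fst.prodMk ((measurable_update z).comp measurable_snd)) hA
  have hright : ∀ s, μ 0 ((·, s) ⁻¹' S) = 0 ∨ μ 0 ((·, s) ⁻¹' S) = 1 :=
    fun s => h.measure_insertNth_zero (update z j s)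
  have hleft : ∀ t, μ (Fin.succAbove 0 j) (Prod.mk t ⁻¹' S) = 0 ∨
      μ (Fin.succAbove 0 j) (Prod.mk t ⁻¹' S) = 1 := fun t => by
    change μ _ {s | Fin.insertNth 0 t (update z j s) ∈ A} = 0 ∨
      μ _ {s | Fin.insertNth 0 t (update z j s) ∈ A} = 1
    simp only [Fin.insertNth_update]
    exact h (Fin.succAbove 0 j) (Fin.insertNth 0 t z)
  change μ (Fin.succAbove 0 j) {s | μ 0 ((·, s) ⁻¹' S) = 1} = 0 ∨
    μ (Fin.succAbove 0 j) {s | μ 0 ((·, s) ⁻¹' S) = 1} = 1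
  rw [← measure_prod_eq_of_measure_slice_eq_zero_or_one hS hright]
  exact measure_prod_eq_zero_or_one_of_measure_slice hS hleft hright

end Lines

theorem HasZeroOneLines.measure_pi_eq_zero_or_one {n : ℕ} {α : Fin n → Type*}
    [∀ i, MeasurableSpace (α i)] {μ : ∀ i, Measure (α i)} [∀ i, IsProbabilityMeasure (μ i)]
    {A : Set (∀ i, α i)} (hA : MeasurableSet A) (h : HasZeroOneLines μ A) :
    Measure.pi μ A = 0 ∨ Measure.pi μ A = 1 := by
  induction n with
  | zero =>
    rcases A.eq_empty_or_nonempty with rfl | ⟨a, ha⟩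
    · simp
    · rw [Subsingleton.eq_univ_of_nonempty ⟨a, ha⟩]
      simp
  | succ n ih =>
    rw [measure_pi_eq_measure_pi_fullLines hA h]
    exact ih (measurableSet_fullLines hA) (h.fullLines hA)

lemma volume_eq_pi_restrict_Icc {n : ℕ} {A : Set (Fin n → ℝ)}
    (hAsub : A ⊆ {X | ∀ i, X i ∈ Icc (0 : ℝ) 1}) :
    volume A = Measure.pi (fun _ => volume.restrict (Icc (0 : ℝ) 1)) A := by
  rw [← Measure.restrict_pi_pi, Measure.restrict_eq_self _ (t := univ.pi _)
    fun x hx i _ => hAsub hx i, volume_pi]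

lemma hasZeroOneLines_restrict_Icc {n : ℕ} {A : Set (Fin n → ℝ)}
    (hAsub : A ⊆ {X | ∀ i, X i ∈ Icc (0 : ℝ) 1})
    (hlines : ∀ (i : Fin n) (y : Fin n → ℝ), (∀ j, y j ∈ Icc (0 : ℝ) 1) →
      volume {t : ℝ | t ∈ Icc (0 : ℝ) 1 ∧ update y i t ∈ A} = 0 ∨
      volume {t : ℝ | t ∈ Icc (0 : ℝ) 1 ∧ update y i t ∈ A} = 1) :
    HasZeroOneLines (fun _ => volume.restrict (Icc (0 : ℝ) 1)) A := by
  intro i y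
  rw [Measure.restrict_apply' measurableSet_Icc]
  by_cases hy : ∀ j ≠ i, y j ∈ Icc (0 : ℝ) 1
  · have hy' : ∀ j, update y i 0 j ∈ Icc (0 : ℝ) 1 := by
      intro j
      rcases eq_or_ne j i with rfl | hji
      · simp
      · simpa [hji] using hy j hji
    convert hlines i (update y i 0) hy' using 3 <;> ext t <;> simp [and_comm]
  · -- `y` leaves the cube in a coordinate other than `i`, so the line misses `A`
    push Not at hy
    obtain ⟨j, hji, hyj⟩ := hy
    refine .inl (measure_mono_null (fun t ht => hyj ?_) measure_empty)
    simpa [hji] using hAsub ht.1 j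

theorem cross_fibering_lines_general (n : ℕ) (A : Set (Fin n → ℝ))
    (hAsub : A ⊆ {X | ∀ i, X i ∈ Set.Icc (0 : ℝ) 1})
    (hAmeas : MeasurableSet A)
    (hlines : ∀ (i : Fin n) (y : Fin n → ℝ), (∀ j, y j ∈ Set.Icc (0 : ℝ) 1) →
      volume {t : ℝ | t ∈ Set.Icc (0 : ℝ) 1 ∧ Function.update y i t ∈ A} = 0 ∨
      volume {t : ℝ | t ∈ Set.Icc (0 : ℝ) 1 ∧ Function.update y i t ∈ A} = 1) :
    volume A = 0 ∨ volume A = 1 := by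
  have : IsProbabilityMeasure (volume.restrict (Icc (0 : ℝ) 1)) := ⟨by simp⟩
  rw [volume_eq_pi_restrict_Icc hAsub]
  exact (hasZeroOneLines_restrict_Icc hAsub hlines).measure_pi_eq_zero_or_one hAmeas

theorem cross_fibering_lines (n : ℕ) (hn : 1 ≤ n) (A : Set (Fin n → ℝ))
    (hAsub : A ⊆ {X | ∀ i, X i ∈ Set.Icc (0 : ℝ) 1})
    (hAmeas : MeasurableSet A)
    (hlines : ∀ (i : Fin n) (y : Fin n → ℝ), (∀ j, y j ∈ Set.Icc (0 : ℝ) 1) →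
      volume {t : ℝ | t ∈ Set.Icc (0 : ℝ) 1 ∧ Function.update y i t ∈ A} = 0 ∨
      volume {t : ℝ | t ∈ Set.Icc (0 : ℝ) 1 ∧ Function.update y i t ∈ A} = 1) :
    volume A = 0 ∨ volume A = 1 :=
  cross_fibering_lines_general n A hAsub hAmeas hlines
end

section
/- Let n, m ≥ 1 and view 𝕀^{nm} as the product of m coordinate planes 𝕀^n, writing points as (X^{(1)},…,X^{(m)}) with each X^{(j)} ∈ 𝕀^n. Let A ⊆ 𝕀^{nm} be a Lebesgue measurable set such that for every n-dimensional plane Π parallel to one of the m coordinate planes (i.e., for every index j ∈ {1,…,m} and every choice of fixed values in 𝕀^n for the blocks X^{(i)} with i ≠ j), the n-dimensional Lebesgue measure of the section A ∩ Π equals 0 or 1. Then M_{nm}(A) = 0 or M_{nm}(A) = 1. -/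
open MeasureTheory Set

/-! Fibers on which `A` is null or full say that, up to a null set, `A` does not depend on the
corresponding block. With two factors this makes `C` a.e. equal both to `B ×ˢ univ` and to
`univ ×ˢ B'`, so `C` is independent of itself and its measure `p` satisfies `p = p * p`.
For `m` factors, split off the first block: the slices over it inherit the hypothesis, hence are
null or full by induction, and the two-factor case applies. Lebesgue measure on the unit cube of
`𝕀^{nm}` is the product of the unit-cube measures of the blocks. -/

namespace MeasureTheory

section ProductOfTwo

variable {α β : Type*} [MeasurableSpace α] [MeasurableSpace β]
  {μ : Measure α} {ν : Measure β}

theorem Measure.ae_eq_prod_univ_of_ae_zero_or_one_left [SFinite μ] [IsProbabilityMeasure ν]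
    {C : Set (α × β)} (hC : MeasurableSet C)
    (h : ∀ᵐ x ∂μ, ν (Prod.mk x ⁻¹' C) = 0 ∨ ν (Prod.mk x ⁻¹' C) = 1) :
    C =ᵐ[μ.prod ν] {x | ν (Prod.mk x ⁻¹' C) = 1} ×ˢ univ := by
  set B := {x | ν (Prod.mk x ⁻¹' C) = 1}
  have hB : MeasurableSet B := measurable_measure_prodMk_left hC (measurableSet_singleton 1)
  refine Filter.eventuallyEq_set.2 <| (Measure.ae_prod_iff_ae_ae
    (p := fun z => z ∈ C ↔ z ∈ B ×ˢ univ) (hC.iff (hB.prod .univ))).2 ?_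
  filter_upwards [h] with x hx
  rcases hx with hx | hx
  · filter_upwards [measure_eq_zero_iff_ae_notMem.1 hx] with y hy
    simp_all [B]
  · have hx' := (prob_compl_eq_zero_iff (measurable_prodMk_left hC)).2 hx
    filter_upwards [compl_mem_ae_iff.2 hx'] with y hy
    simp_all [B]

theorem Measure.ae_eq_univ_prod_of_ae_zero_or_one_right [IsProbabilityMeasure μ]
    [SFinite ν] {C : Set (α × β)} (hC : MeasurableSet C)
    (h : ∀ᵐ y ∂ν, μ ((·, y) ⁻¹' C) = 0 ∨ μ ((·, y) ⁻¹' C) = 1) :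
    C =ᵐ[μ.prod ν] univ ×ˢ {y | μ ((·, y) ⁻¹' C) = 1} := by
  have := Measure.measurePreserving_swap.quasiMeasurePreserving.preimage_ae_eq
    (Measure.ae_eq_prod_univ_of_ae_zero_or_one_left (measurable_swap hC) h)
  rwa [preimage_swap_prod, ← preimage_comp, Prod.swap_swap_eq, preimage_id] at this

theorem Measure.prod_eq_zero_or_one_of_ae_zero_or_one
    [IsProbabilityMeasure μ] [IsProbabilityMeasure ν]
    {C : Set (α × β)} (hC : MeasurableSet C)
    (hleft : ∀ᵐ x ∂μ, ν (Prod.mk x ⁻¹' C) = 0 ∨ ν (Prod.mk x ⁻¹' C) = 1)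
    (hright : ∀ᵐ y ∂ν, μ ((·, y) ⁻¹' C) = 0 ∨ μ ((·, y) ⁻¹' C) = 1) :
    μ.prod ν C = 0 ∨ μ.prod ν C = 1 := by
  set B := {x | ν (Prod.mk x ⁻¹' C) = 1}
  set B' := {y | μ ((·, y) ⁻¹' C) = 1}
  have hCB : C =ᵐ[μ.prod ν] B ×ˢ univ :=
    Measure.ae_eq_prod_univ_of_ae_zero_or_one_left hC hleft
  have hCB' : C =ᵐ[μ.prod ν] univ ×ˢ B' :=
    Measure.ae_eq_univ_prod_of_ae_zero_or_one_right hC hright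
  have hμB : μ.prod ν C = μ B := by
    rw [measure_congr hCB, Measure.prod_prod, measure_univ, mul_one]
  have hνB' : μ.prod ν C = ν B' := by
    rw [measure_congr hCB', Measure.prod_prod, measure_univ, one_mul]
  have hidem : μ.prod ν C * μ.prod ν C = μ.prod ν C := calc
    _ = μ.prod ν (B ×ˢ B') := by rw [Measure.prod_prod, ← hμB, ← hνB']
    _ = μ.prod ν ((B ×ˢ univ) ∩ (univ ×ˢ B')) := by
      rw [prod_inter_prod, inter_univ, univ_inter]
    _ = μ.prod ν (C ∩ C) := measure_congr (hCB.inter hCB').symm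
    _ = μ.prod ν C := by rw [inter_self]
  exact or_iff_not_imp_left.2 fun h0 => (ENNReal.mul_eq_left h0 (measure_ne_top _ _)).1 hidem

end ProductOfTwo

theorem Measure.pi_eq_zero_or_one_of_ae_update_zero_or_one {m : ℕ} {α : Fin m → Type*}
    [∀ i, MeasurableSpace (α i)] (μ : ∀ i, Measure (α i))
    [∀ i, IsProbabilityMeasure (μ i)] {A : Set (∀ i, α i)} (hA : MeasurableSet A)
    (h : ∀ j, ∀ᵐ x ∂Measure.pi μ,
      μ j {y | Function.update x j y ∈ A} = 0 ∨ μ j {y | Function.update x j y ∈ A} = 1) :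
    Measure.pi μ A = 0 ∨ Measure.pi μ A = 1 := by
  induction m with
  | zero =>
    rcases A.eq_empty_or_nonempty with rfl | hne
    · simp
    · simp [hne.eq_univ]
  | succ m ih =>
    have he := (measurePreserving_piFinSuccAbove μ 0).symm
    have hslice : ∀ j, ∀ᵐ a ∂μ 0, ∀ᵐ z ∂Measure.pi fun k => μ (Fin.succAbove 0 k),
        μ j {y | Function.update (Fin.insertNth 0 a z) j y ∈ A} = 0 ∨
        μ j {y | Function.update (Fin.insertNth 0 a z) j y ∈ A} = 1 :=
      fun j => Measure.ae_ae_of_ae_prod (he.quasiMeasurePreserving.ae (h j))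
    set C : Set (α 0 × ∀ k, α (Fin.succAbove 0 k)) := {p | Fin.insertNth 0 p.1 p.2 ∈ A}
    have hC : MeasurableSet C := he.measurable hA
    rw [← he.measure_preimage hA.nullMeasurableSet]
    refine Measure.prod_eq_zero_or_one_of_ae_zero_or_one (C := C) hC ?_ ?_
    · filter_upwards [ae_all_iff.2 fun k => hslice (Fin.succAbove 0 k)] with a ha
      refine ih _ (measurable_prodMk_left hC) fun k => ?_
      filter_upwards [ha k] with z hz
      simp only [← Fin.insertNth_update] at hz
      exact hz
    · obtain ⟨a, ha⟩ := (hslice 0).exists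
      filter_upwards [ha] with z hz
      simp only [Fin.update_insertNth] at hz
      exact hz

end MeasureTheory

theorem cross_fibering_planes_general (n m : ℕ)
    (A : Set (Fin m → Fin n → ℝ))
    (hAsub : A ⊆ {X | ∀ j i, X j i ∈ Set.Icc (0 : ℝ) 1})
    (hAmeas : MeasurableSet A)
    (hplanes : ∀ (j : Fin m) (x : Fin m → Fin n → ℝ),
      (∀ j' i, x j' i ∈ Set.Icc (0 : ℝ) 1) →
      volume {Y : Fin n → ℝ | (∀ i, Y i ∈ Set.Icc (0 : ℝ) 1) ∧
          Function.update x j Y ∈ A} = 0 ∨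
      volume {Y : Fin n → ℝ | (∀ i, Y i ∈ Set.Icc (0 : ℝ) 1) ∧
          Function.update x j Y ∈ A} = 1) :
    volume A = 0 ∨ volume A = 1 := by
  set Q : Set (Fin n → ℝ) := Icc 0 1
  have hQ : MeasurableSet Q := measurableSet_Icc
  have : IsProbabilityMeasure (volume.restrict Q) := ⟨by simp [Q, Real.volume_Icc_pi]⟩
  have hcube : {X : Fin m → Fin n → ℝ | ∀ j i, X j i ∈ Icc 0 1} = univ.pi fun _ => Q := by
    ext X; simp [Q, Pi.le_def, forall_and]
  have hvol : volume.restrict (univ.pi fun _ => Q) =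
      Measure.pi fun _ : Fin m => volume.restrict Q :=
    Measure.restrict_pi_pi _ _
  have hAcube : A ⊆ univ.pi fun _ => Q := hcube ▸ hAsub
  rw [← inter_eq_left.2 hAcube, ← Measure.restrict_apply hAmeas, hvol]
  refine Measure.pi_eq_zero_or_one_of_ae_update_zero_or_one _ hAmeas fun j => ?_
  rw [← hvol]
  filter_upwards [ae_restrict_mem (MeasurableSet.univ_pi fun _ => hQ)] with x hx
  have hsec : MeasurableSet {Y | Function.update x j Y ∈ A} := measurable_update x hAmeas
  rw [Measure.restrict_apply hsec]
  convert hplanes j x (by rw [← hcube] at hx; exact hx) using 3 <;>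
  · ext Y; simp [Q, Pi.le_def, forall_and, and_comm]

theorem cross_fibering_planes (n m : ℕ) (hn : 1 ≤ n) (hm : 1 ≤ m)
    (A : Set (Fin m → Fin n → ℝ))
    (hAsub : A ⊆ {X | ∀ j i, X j i ∈ Set.Icc (0 : ℝ) 1})
    (hAmeas : MeasurableSet A)
    (hplanes : ∀ (j : Fin m) (x : Fin m → Fin n → ℝ),
      (∀ j' i, x j' i ∈ Set.Icc (0 : ℝ) 1) →
      volume {Y : Fin n → ℝ | (∀ i, Y i ∈ Set.Icc (0 : ℝ) 1) ∧
          Function.update x j Y ∈ A} = 0 ∨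
      volume {Y : Fin n → ℝ | (∀ i, Y i ∈ Set.Icc (0 : ℝ) 1) ∧
          Function.update x j Y ∈ A} = 1) :
    volume A = 0 ∨ volume A = 1 :=
  cross_fibering_planes_general n m A hAsub hAmeas hplanes
end

section
/- Let n, m ≥ 1 and let Ψ_1, …, Ψ_m : ℤ^n \ {0} → [0,∞). Then M_{nm}(∪_{k∈ℕ} A_{n,m}(kΨ_1, …, kΨ_m)) = M_{nm}(∩_{k∈ℕ} A_{n,m}(Ψ_1/k, …, Ψ_m/k)). -/
/-!
`X ∈ A(Φ)` says that for infinitely many `q ≠ 0` every row `X j` lies in the `Φ j q`-neighbourhood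
`slab q (Φ j q)` of the hyperplanes `q · z ∈ ℤ` (for fixed `q` only finitely many `p` can work).
The heart is a Cassels-type scaling statement for a single row: for any set `Q` of integer
vectors, almost every point lying in infinitely many slabs `slab q (w q)`, `q ∈ Q`, lies in
infinitely many of the thinner slabs `slab q (w q / K)`. Indeed, if `x` lies in the slab of
width `W ≤ 1/2` of a large `q`, then the ball of radius `2W / ‖q‖∞` about `x` contains a ball
filling the fixed proportion `(4nK)⁻ⁿ` of it inside the thin slab; so a point avoiding all
but finitely many thin slabs is not a Lebesgue density point of the set of such points.
Fubini shrinks the rows one at a time, giving `A(Φ) ⊆ A(Φ / K)` up to a null set for every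
`K ≥ 1`; with `Φ = kΨ` and `K = k k'` this gives `⋃ₖ A(kΨ) ⊆ ⋂ₖ' A(Ψ / k')` up to a null set,
and the reverse inclusion is trivial.
-/

open MeasureTheory
open scoped ENNReal

/-- The set `A_{n,m}(Ψ₁, …, Ψ_m)`: no coprimality condition. -/
def simulSetA (n m : ℕ) (Ψ : Fin m → (Fin n → ℤ) → ℝ) : Set (Fin m → Fin n → ℝ) :=
  {X | (∀ j i, X j i ∈ Set.Icc (0 : ℝ) 1) ∧
    {qp : (Fin n → ℤ) × (Fin m → ℤ) | qp.1 ≠ 0 ∧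
      ∀ j, |(∑ i, (qp.1 i : ℝ) * X j i) + (qp.2 j : ℝ)| < Ψ j qp.1}.Infinite}

open Metric Filter Topology

variable {n : ℕ}

def slab (q : Fin n → ℤ) (w : ℝ) : Set (Fin n → ℝ) :=
  {z | ∃ p : ℤ, |(∑ i, (q i : ℝ) * z i) + p| < w}

lemma isOpen_slab (q : Fin n → ℤ) (w : ℝ) : IsOpen (slab q w) := by
  simp only [slab, Set.ofPred_exists]
  exact isOpen_iUnion fun p => isOpen_lt (by fun_prop) continuous_const

lemma slab_mono (q : Fin n → ℤ) {a b : ℝ} (h : a ≤ b) : slab q a ⊆ slab q b :=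
  fun _ ⟨p, hp⟩ => ⟨p, hp.trans_le h⟩

lemma exists_abs_add_intCast_le_min_of_mem_slab {q : Fin n → ℤ} {w : ℝ} {z : Fin n → ℝ}
    (hz : z ∈ slab q w) : ∃ p : ℤ, |(∑ i, (q i : ℝ) * z i) + p| ≤ min w (1 / 2) := by
  obtain ⟨p, hp⟩ := hz
  set s := ∑ i, (q i : ℝ) * z i
  have h : |s + ((-round s : ℤ) : ℝ)| = |s - round s| := by push_cast; ring_nf
  refine ⟨-round s, le_min ?_ (h ▸ abs_sub_round s)⟩
  calc |s + ((-round s : ℤ) : ℝ)| = |s - round s| := h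
    _ ≤ |s - ((-p : ℤ) : ℝ)| := round_le s (-p)
    _ ≤ w := by push_cast; rw [sub_neg_eq_add]; exact hp.le

lemma exists_closedBall_subset_slab_inter {q : Fin n → ℤ} {i₀ : Fin n}
    (hmax : ∀ i, |(q i : ℝ)| ≤ |(q i₀ : ℝ)|) (hq : q i₀ ≠ 0) {x : Fin n → ℝ} {p : ℤ} {W K : ℝ}
    (hx : |(∑ i, (q i : ℝ) * x i) + p| ≤ W) (hW : 0 < W) (hK : 1 ≤ K) :
    ∃ y, closedBall y (W / (2 * n * K * |(q i₀ : ℝ)|)) ⊆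
      slab q (W / K) ∩ closedBall x (2 * W / |(q i₀ : ℝ)|) := by
  set A := |(q i₀ : ℝ)|
  have hA : 0 < A := abs_pos.2 (Int.cast_ne_zero.2 hq)
  have hn : (1 : ℝ) ≤ n := by exact_mod_cast i₀.pos
  set S := (∑ i, (q i : ℝ) * x i) + p
  -- `x` moved along the coordinate `i₀`, where `|q i|` is largest, onto `q · y + p = 0`
  set y := x - (S / q i₀) • Pi.single i₀ 1
  have hy : (∑ i, (q i : ℝ) * y i) + p = 0 := by
    simp only [y, Pi.sub_apply, Pi.smul_apply, smul_eq_mul, mul_sub, Finset.sum_sub_distrib,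
      Pi.single_apply, mul_ite, mul_one, mul_zero, Finset.sum_ite_eq', Finset.mem_univ, if_true]
    field_simp
    ring
  have hyx : dist y x ≤ W / A := by
    rw [dist_eq_norm, sub_sub_cancel_left, norm_neg, norm_smul, Pi.norm_single, norm_one,
      mul_one, norm_div, Real.norm_eq_abs, Real.norm_eq_abs]
    exact div_le_div_of_nonneg_right hx hA.le
  have hρ : W / (2 * n * K * A) ≤ W / A := by
    gcongr
    nlinarith [mul_le_mul hn hK zero_le_one (by positivity : (0 : ℝ) ≤ n)]
  refine ⟨y, fun z hz => ⟨⟨p, ?_⟩, ?_⟩⟩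
  · have hzy : ∀ i, |z i - y i| ≤ W / (2 * n * K * A) := fun i =>
      (Real.dist_eq _ _).symm.trans_le ((dist_le_pi_dist z y i).trans hz)
    calc |(∑ i, (q i : ℝ) * z i) + p| = |∑ i, (q i : ℝ) * (z i - y i)| := by
          rw [← sub_zero ((∑ i, (q i : ℝ) * z i) + p), ← hy]
          simp only [mul_sub, Finset.sum_sub_distrib]
          ring_nf
      _ ≤ ∑ i, |(q i : ℝ)| * |z i - y i| := by
          simpa only [abs_mul] using Finset.abs_sum_le_sum_abs (fun i => (q i : ℝ) * (z i - y i)) _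
      _ ≤ ∑ _i : Fin n, A * (W / (2 * n * K * A)) :=
          Finset.sum_le_sum fun i _ => mul_le_mul (hmax i) (hzy i) (abs_nonneg _) hA.le
      _ = W / (2 * K) := by
          simp only [Finset.sum_const, Finset.card_univ, Fintype.card_fin, nsmul_eq_mul]
          field_simp
      _ < W / K := by gcongr; linarith
  · calc dist z x ≤ dist z y + dist y x := dist_triangle z y x
      _ ≤ W / A + W / A := add_le_add (hz.trans hρ) hyx
      _ = 2 * W / A := by ring

lemma volume_closedBall_div_volume_closedBall (x y : Fin n → ℝ) {ρ r : ℝ} (hρ : 0 ≤ ρ)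
    (hr : 0 < r) :
    volume (closedBall y ρ) / volume (closedBall x r) = ENNReal.ofReal ((ρ / r) ^ n) := by
  rw [Real.volume_pi_closedBall _ hρ, Real.volume_pi_closedBall _ hr.le,
    ← ENNReal.ofReal_div_of_pos (by positivity), Fintype.card_fin, ← div_pow,
    mul_div_mul_left _ _ two_ne_zero]

lemma ofReal_le_volume_slab_inter_closedBall_div {q : Fin n → ℤ} {i₀ : Fin n}
    (hmax : ∀ i, |(q i : ℝ)| ≤ |(q i₀ : ℝ)|) (hq : q i₀ ≠ 0) {x : Fin n → ℝ} {p : ℤ} {W K : ℝ}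
    (hx : |(∑ i, (q i : ℝ) * x i) + p| ≤ W) (hW : 0 < W) (hK : 1 ≤ K) :
    ENNReal.ofReal ((4 * n * K)⁻¹ ^ n) ≤
      volume (slab q (W / K) ∩ closedBall x (2 * W / |(q i₀ : ℝ)|)) /
        volume (closedBall x (2 * W / |(q i₀ : ℝ)|)) := by
  have hA : 0 < |(q i₀ : ℝ)| := abs_pos.2 (Int.cast_ne_zero.2 hq)
  obtain ⟨y, hy⟩ := exists_closedBall_subset_slab_inter hmax hq hx hW hK
  calc ENNReal.ofReal ((4 * n * K)⁻¹ ^ n)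
      = volume (closedBall y (W / (2 * n * K * |(q i₀ : ℝ)|))) /
          volume (closedBall x (2 * W / |(q i₀ : ℝ)|)) := by
        rw [volume_closedBall_div_volume_closedBall _ _ (by positivity) (by positivity)]
        congr 2
        field_simp
        ring
    _ ≤ _ := ENNReal.div_le_div_right (measure_mono hy) _

theorem measure_eq_zero_of_frequently_le_div {β : Type*} [MetricSpace β] [MeasurableSpace β]
    [BorelSpace β] [SecondCountableTopology β] [HasBesicovitchCovering β] (μ : Measure β)
    [IsLocallyFiniteMeasure μ] {s : Set β} (hs : MeasurableSet s) {c : ℝ≥0∞} (hc : 0 < c)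
    (h : ∀ x ∈ s, ∃ᶠ r in 𝓝[>] 0,
      ∃ t ⊆ sᶜ, c ≤ μ (t ∩ closedBall x r) / μ (closedBall x r)) :
    μ s = 0 := by
  rw [measure_eq_zero_iff_ae_notMem]
  filter_upwards [Besicovitch.ae_tendsto_measure_inter_div_of_measurableSet μ hs.compl]
    with x hx hxs
  rw [Set.indicator_of_notMem (Set.notMem_compl_iff.2 hxs)] at hx
  obtain ⟨r, ⟨t, hts, hct⟩, hlt⟩ :=
    ((h x hxs).and_eventually ((tendsto_order.1 hx).2 c hc)).exists
  refine (hct.trans ?_).not_gt hlt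
  exact ENNReal.div_le_div_right (measure_mono (Set.inter_subset_inter_left _ hts)) _

lemma Set.Infinite.exists_lt_abs_intCast {S : Set (Fin n → ℤ)} (hS : S.Infinite) (L : ℝ) :
    ∃ q ∈ S, ∃ i, L < |(q i : ℝ)| := by
  by_contra! h
  refine hS ((Set.Finite.pi fun _ => Set.finite_Icc (-⌊L⌋) ⌊L⌋).subset fun q hq => ?_)
  simp only [Set.mem_pi, Set.mem_univ, true_implies, Set.mem_Icc, ← abs_le]
  exact fun i => Int.le_floor.2 (by exact_mod_cast h q hq i)

lemma measurableSet_setOf_infinite {α ι : Type*} [MeasurableSpace α] [Countable ι]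
    {p : ι → α → Prop} (hp : ∀ i, MeasurableSet {x | p i x}) :
    MeasurableSet {x | {i | p i x}.Infinite} := by
  have h : {x | {i | p i x}.Infinite} = ⋂ F : Finset ι, ⋃ i ∈ (F : Set ι)ᶜ, {x | p i x} := by
    ext x
    simp only [Set.mem_ofPred_eq, Set.mem_iInter, Set.mem_iUnion, exists_prop,
      Set.mem_compl_iff, Finset.mem_coe]
    refine ⟨fun hx F => ?_, fun hx hfin => ?_⟩
    · obtain ⟨i, hi, hiF⟩ := hx.exists_notMem_finset F
      exact ⟨i, hiF, hi⟩
    · obtain ⟨i, hiF, hi⟩ := hx hfin.toFinset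
      exact hiF (hfin.mem_toFinset.2 hi)
  rw [h]
  exact .iInter fun F => .biUnion (Set.to_countable _) fun i _ => hp i

def approxSet (Q : Set (Fin n → ℤ)) (w : (Fin n → ℤ) → ℝ) : Set (Fin n → ℝ) :=
  {z | {q ∈ Q | z ∈ slab q (w q)}.Infinite}

lemma measurableSet_approxSet (Q : Set (Fin n → ℤ)) (w : (Fin n → ℤ) → ℝ) :
    MeasurableSet (approxSet Q w) :=
  measurableSet_setOf_infinite fun q =>
    (MeasurableSet.const (q ∈ Q)).inter (isOpen_slab q (w q)).measurableSet

lemma volume_approxSet_diff_iUnion_slab (Q : Set (Fin n → ℤ)) (w : (Fin n → ℤ) → ℝ)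
    (F : Finset (Fin n → ℤ)) {K : ℝ} (hK : 1 ≤ K) (hn : 0 < n) :
    volume (approxSet Q w \ ⋃ q ∈ Q \ F, slab q (w q / K)) = 0 := by
  set E := approxSet Q w \ ⋃ q ∈ Q \ F, slab q (w q / K)
  have hE : MeasurableSet E := (measurableSet_approxSet Q w).diff <|
    .biUnion (Set.to_countable _) fun q _ => (isOpen_slab q _).measurableSet
  refine measure_eq_zero_of_frequently_le_div volume hE (c := ENNReal.ofReal ((4 * n * K)⁻¹ ^ n))
    (ENNReal.ofReal_pos.2 (by positivity)) fun x hx => ?_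
  rw [(nhdsGT_basis 0).frequently_iff]
  intro ε hε
  obtain ⟨q, ⟨⟨hqQ, hxq⟩, hqF⟩, i₁, hi₁⟩ := (hx.1.sdiff F.finite_toSet).exists_lt_abs_intCast ε⁻¹
  have : Nonempty (Fin n) := ⟨i₁⟩
  obtain ⟨i₀, hi₀⟩ := Finite.exists_max fun i => |(q i : ℝ)|
  have hA : ε⁻¹ < |(q i₀ : ℝ)| := hi₁.trans_le (hi₀ i₁)
  have hq : q i₀ ≠ 0 := by
    rintro h
    simp only [h, Int.cast_zero, abs_zero] at hA
    exact (inv_pos.2 hε).not_gt hA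
  have hw : 0 < w q := by
    obtain ⟨p, hp⟩ := hxq
    exact (abs_nonneg _).trans_lt hp
  obtain ⟨p, hp⟩ := exists_abs_add_intCast_le_min_of_mem_slab hxq
  set W := min (w q) (1 / 2)
  have hW : 0 < W := lt_min hw (by norm_num)
  refine ⟨2 * W / |(q i₀ : ℝ)|, ⟨by positivity, ?_⟩, slab q (W / K), ?_,
    ofReal_le_volume_slab_inter_closedBall_div hi₀ hq hp hW hK⟩
  · calc 2 * W / |(q i₀ : ℝ)| ≤ 1 / |(q i₀ : ℝ)| := by
          gcongr
          linarith [min_le_right (w q) (1 / 2)]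
      _ < ε := by
          rw [one_div, inv_lt_comm₀ (by positivity) hε]
          exact hA
  · refine fun z hz hzE => hzE.2 (Set.mem_biUnion ⟨hqQ, hqF⟩ (slab_mono q ?_ hz))
    gcongr
    exact min_le_left _ _

theorem approxSet_ae_le_div (Q : Set (Fin n → ℤ)) (w : (Fin n → ℤ) → ℝ) {K : ℝ} (hK : 1 ≤ K) :
    approxSet Q w ≤ᵐ[volume] approxSet Q fun q => w q / K := by
  rcases n.eq_zero_or_pos with rfl | hn
  · exact .of_forall fun z hz => (hz (Set.toFinite _)).elim
  rw [ae_le_set]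
  refine measure_mono_null (fun x hx => ?_) (measure_iUnion_null fun F =>
    volume_approxSet_diff_iUnion_slab Q w F hK hn)
  have hfin : {q ∈ Q | x ∈ slab q (w q / K)}.Finite := Set.not_infinite.1 hx.2
  refine Set.mem_iUnion.2 ⟨hfin.toFinset, hx.1, fun hx' => ?_⟩
  obtain ⟨q, ⟨hqQ, hqF⟩, hxq⟩ := Set.mem_iUnion₂.1 hx'
  exact hqF (hfin.mem_toFinset.2 ⟨hqQ, hxq⟩)

lemma finite_setOf_forall_abs_add_intCast_lt {ι : Type*} [Finite ι] (c b : ι → ℝ) :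
    {p : ι → ℤ | ∀ j, |c j + p j| < b j}.Finite := by
  refine (Set.Finite.pi fun j => Set.finite_Icc ⌊-c j - b j⌋ ⌈b j - c j⌉).subset fun p hp => ?_
  simp only [Set.mem_pi, Set.mem_univ, true_implies, Set.mem_Icc, Int.floor_le_iff,
    Int.le_ceil_iff]
  exact fun j => ⟨by linarith [(abs_lt.1 (hp j)).1], by linarith [(abs_lt.1 (hp j)).2]⟩

def simulDenominators {ι : Type*} (Φ : ι → (Fin n → ℤ) → ℝ) (X : ι → Fin n → ℝ) : Set (Fin n → ℤ) :=
  {q | q ≠ 0 ∧ ∀ j, X j ∈ slab q (Φ j q)}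

lemma mem_simulSetA_iff {m : ℕ} {Φ : Fin m → (Fin n → ℤ) → ℝ} {X : Fin m → Fin n → ℝ} :
    X ∈ simulSetA n m Φ ↔
      (∀ j i, X j i ∈ Set.Icc (0 : ℝ) 1) ∧ (simulDenominators Φ X).Infinite := by
  refine and_congr_right fun _ => ?_
  set P := {qp : (Fin n → ℤ) × (Fin m → ℤ) | qp.1 ≠ 0 ∧
    ∀ j, |(∑ i, (qp.1 i : ℝ) * X j i) + (qp.2 j : ℝ)| < Φ j qp.1}
  have himage : Prod.fst '' P = simulDenominators Φ X := by
    ext q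
    simp [P, simulDenominators, slab, Classical.skolem]
  rw [← himage]
  refine ⟨fun h hfin => h (hfin.of_finite_fibers _ fun q _ => ?_), fun h => h.of_image _⟩
  refine ((finite_setOf_forall_abs_add_intCast_lt (fun j => ∑ i, (q i : ℝ) * X j i)
    fun j => Φ j q).image fun p => (q, p)).subset ?_
  rintro ⟨q', p⟩ ⟨⟨-, hp⟩, rfl : q' = q⟩
  exact ⟨p, hp, rfl⟩

lemma measurableSet_simulSetA {m : ℕ} (Φ : Fin m → (Fin n → ℤ) → ℝ) :
    MeasurableSet (simulSetA n m Φ) := by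
  have hcube : MeasurableSet {X : Fin m → Fin n → ℝ | ∀ j i, X j i ∈ Set.Icc (0 : ℝ) 1} := by
    measurability
  have happrox : MeasurableSet {X : Fin m → Fin n → ℝ | (simulDenominators Φ X).Infinite} :=
    measurableSet_setOf_infinite fun q => measurableSet_setOfPred.2 <| measurable_const.and <|
      .forall fun j => measurableSet_setOfPred.1 <|
        (isOpen_slab q (Φ j q)).measurableSet.preimage (measurable_pi_apply j)
  convert hcube.inter happrox using 1
  ext X
  exact mem_simulSetA_iff

lemma simulDenominators_insertNth {m : ℕ} (Φ : Fin (m + 1) → (Fin n → ℤ) → ℝ) (t : Fin (m + 1))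
    (z : Fin n → ℝ) (Y : Fin m → Fin n → ℝ) :
    simulDenominators Φ (t.insertNth z Y) =
      {q ∈ simulDenominators (fun j => Φ (t.succAbove j)) Y | z ∈ slab q (Φ t q)} := by
  ext q
  simp only [simulDenominators, Set.mem_ofPred_eq, t.forall_iff_succAbove, Fin.insertNth_apply_same,
    Fin.insertNth_apply_succAbove]
  tauto

lemma simulSetA_ae_le_update_div {m : ℕ} (Φ : Fin (m + 1) → (Fin n → ℤ) → ℝ) (t : Fin (m + 1))
    {K : ℝ} (hK : 1 ≤ K) :
    simulSetA n (m + 1) Φ ≤ᵐ[volume]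
      simulSetA n (m + 1) (Function.update Φ t fun q => Φ t q / K) := by
  set Φ' := Function.update Φ t fun q => Φ t q / K
  set D := simulSetA n (m + 1) Φ \ simulSetA n (m + 1) Φ'
  have hD : MeasurableSet D := (measurableSet_simulSetA Φ).diff (measurableSet_simulSetA Φ')
  let e := MeasurableEquiv.piFinSuccAbove (fun _ : Fin (m + 1) => Fin n → ℝ) t
  have he : MeasurePreserving e.symm volume volume :=
    (volume_preserving_piFinSuccAbove (fun _ : Fin (m + 1) => Fin n → ℝ) t).symm e
  rw [ae_le_set, ← he.measure_preimage hD.nullMeasurableSet, Measure.volume_eq_prod,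
    Measure.prod_apply_symm (hD.preimage e.symm.measurable)]
  have hsucc : (fun j => Φ' (t.succAbove j)) = fun j => Φ (t.succAbove j) :=
    funext fun j => Function.update_of_ne (t.succAbove_ne j) _ _
  have hslice : ∀ Y, volume ((fun z => (z, Y)) ⁻¹' (e.symm ⁻¹' D)) = 0 := fun Y => by
    refine measure_mono_null (fun z hz => ?_) <| ae_le_set.1 <|
      approxSet_ae_le_div (simulDenominators (fun j => Φ (t.succAbove j)) Y) (Φ t) hK
    have hz' : t.insertNth z Y ∈ D := hz
    simp only [D, Set.mem_sdiff, mem_simulSetA_iff, simulDenominators_insertNth, hsucc, Φ',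
      Function.update_self] at hz'
    exact ⟨hz'.1.2, fun h => hz'.2 ⟨hz'.1.1, h⟩⟩
  simp [hslice]

theorem simulSetA_ae_le_div {m : ℕ} (Φ : Fin m → (Fin n → ℤ) → ℝ) {K : ℝ} (hK : 1 ≤ K) :
    simulSetA n m Φ ≤ᵐ[volume] simulSetA n m fun j q => Φ j q / K := by
  cases m with
  | zero => exact Subsingleton.elim Φ (fun j q => Φ j q / K) ▸ .rfl
  | succ m =>
    classical
    suffices ∀ T : Finset (Fin (m + 1)), simulSetA n (m + 1) Φ ≤ᵐ[volume]
        simulSetA n (m + 1) (T.piecewise (fun j q => Φ j q / K) Φ) by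
      simpa using this Finset.univ
    intro T
    induction T using Finset.induction_on with
    | empty => simpa using EventuallyLE.rfl
    | insert t T ht ih =>
      have h := simulSetA_ae_le_update_div (T.piecewise (fun j q => Φ j q / K) Φ) t hK
      rw [Finset.piecewise_eq_of_notMem _ _ _ ht] at h
      rw [Finset.piecewise_insert]
      exact ih.trans h

theorem simulA_union_eq_inter_general (n m : ℕ) (Ψ : Fin m → (Fin n → ℤ) → ℝ) :
    volume (⋃ k : ℕ+, simulSetA n m (fun j q => (k : ℝ) * Ψ j q)) =
      volume (⋂ k : ℕ+, simulSetA n m (fun j q => Ψ j q / (k : ℝ))) := by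
  have hscale (k k' : ℕ+) : simulSetA n m (fun j q => (k : ℝ) * Ψ j q) ≤ᵐ[volume]
      simulSetA n m (fun j q => Ψ j q / (k' : ℝ)) := by
    have hk : (0 : ℝ) < k := by positivity
    simpa only [mul_div_mul_left _ _ hk.ne'] using simulSetA_ae_le_div
      (fun j q => (k : ℝ) * Ψ j q) (K := k * k')
      (one_le_mul_of_one_le_of_one_le (Nat.one_le_cast.2 k.pos) (Nat.one_le_cast.2 k'.pos))
  have hunion : (⋃ k : ℕ+, simulSetA n m (fun j q => (k : ℝ) * Ψ j q)) ≤ᵐ[volume]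
      ⋂ k : ℕ+, simulSetA n m (fun j q => Ψ j q / (k : ℝ)) := by
    simpa only [Set.iUnion_const, Set.iInter_const] using
      Filter.EventuallyLE.countable_iUnion fun k => .countable_iInter fun k' => hscale k k'
  have hinter : (⋂ k : ℕ+, simulSetA n m (fun j q => Ψ j q / (k : ℝ))) ⊆
      ⋃ k : ℕ+, simulSetA n m (fun j q => (k : ℝ) * Ψ j q) := fun X hX =>
    Set.mem_iUnion.2 ⟨1, by simpa using Set.mem_iInter.1 hX 1⟩
  exact measure_congr (hunion.antisymm (.of_forall hinter))

theorem simulA_union_eq_inter (n m : ℕ) (hn : 1 ≤ n) (hm : 1 ≤ m)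
    (Ψ : Fin m → (Fin n → ℤ) → ℝ) (hΨ : ∀ j q, q ≠ 0 → 0 ≤ Ψ j q) :
    volume (⋃ k : ℕ+, simulSetA n m (fun j q => (k : ℝ) * Ψ j q)) =
      volume (⋂ k : ℕ+, simulSetA n m (fun j q => Ψ j q / (k : ℝ))) :=
  simulA_union_eq_inter_general n m Ψ
end
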